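/- arXiv:1609.08462 — 3 statements merged into one kernel-verified Lean document; each statement's English description precedes it below -/
import Mathlib

section
/- Let f : S → ℂ be bounded, continuous on the strip S = {z : 0 ≤ Re(z) ≤ 1}, analytic in the interior, with |f(z)| ≤ M on S. If |f(θ)| = M for some θ in the open strip, then f is constant on S. -/
/-- Maximum modulus principle for the strip `{z : 0 ≤ Re z ≤ 1}`: if a bounded
continuous function, analytic in the interior, attains its bound `M` at an
interior point, then it is constant on the strip. -/
theorem max_modulus_strip (f : ℂ → ℂ) (M : ℝ)
    (hcont : ContinuousOn f {z : ℂ | 0 ≤ z.re ∧ z.re ≤ 1})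
    (hdiff : DifferentiableOn ℂ f {z : ℂ | 0 < z.re ∧ z.re < 1})
    (hle : ∀ z ∈ {z : ℂ | 0 ≤ z.re ∧ z.re ≤ 1}, ‖f z‖ ≤ M)
    (θ : ℂ) (hθ₀ : 0 < θ.re) (hθ₁ : θ.re < 1) (hmax : ‖f θ‖ = M) :
    ∀ z ∈ {z : ℂ | 0 ≤ z.re ∧ z.re ≤ 1}, f z = f θ := by
  set U : Set ℂ := {z : ℂ | 0 < z.re ∧ z.re < 1} with hU
  set S : Set ℂ := {z : ℂ | 0 ≤ z.re ∧ z.re ≤ 1} with hS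
  have hUopen : IsOpen U := by
    have : U = Complex.re ⁻¹' Set.Ioo 0 1 := rfl
    rw [this]; exact isOpen_Ioo.preimage Complex.continuous_re
  have hUconv : Convex ℝ U := by
    have : U = Complex.reLm ⁻¹' Set.Ioo 0 1 := rfl
    rw [this]
    exact (convex_Ioo (0:ℝ) 1).linear_preimage Complex.reLm
  have hUS : U ⊆ S := fun z hz => ⟨hz.1.le, hz.2.le⟩
  have hθU : θ ∈ U := ⟨hθ₀, hθ₁⟩
  have hmaxOn : IsMaxOn (norm ∘ f) U θ := by
    intro z hz
    simp only [Function.comp, Set.mem_setOf_eq, hmax]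
    exact hle z (hUS hz)
  have hEqU : Set.EqOn f (Function.const ℂ (f θ)) U :=
    Complex.eqOn_of_isPreconnected_of_isMaxOn_norm hUconv.isPreconnected hUopen hdiff hθU hmaxOn
  have hScl : S ⊆ closure U := by
    intro z hz
    rw [mem_closure_iff_seq_limit]
    refine ⟨fun n => z + ((n : ℝ) + 1)⁻¹ • (θ - z), fun n => ?_, ?_⟩
    · have hpos : (0 : ℝ) < ((n : ℝ) + 1)⁻¹ := by positivity
      have hle1 : ((n : ℝ) + 1)⁻¹ ≤ 1 := by
        rw [inv_le_one_iff₀]; right; linarith [Nat.cast_nonneg (α := ℝ) n]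
      simp only [hU, Set.mem_setOf_eq, Complex.add_re, Complex.smul_re, Complex.sub_re, smul_eq_mul]
      obtain ⟨hz0, hz1⟩ := hz
      constructor
      · nlinarith [mul_pos hpos hθ₀]
      · nlinarith [mul_pos hpos (sub_pos.mpr hθ₁)]
    · have : Filter.Tendsto (fun n : ℕ => ((n : ℝ) + 1)⁻¹ • (θ - z)) Filter.atTop (nhds 0) := by
        have h0 : Filter.Tendsto (fun n : ℕ => ((n : ℝ) + 1)⁻¹) Filter.atTop (nhds 0) :=
          tendsto_one_div_add_atTop_nhds_zero_nat.congr (by intro n; rw [one_div])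
        simpa using h0.smul_const (θ - z)
      have := (tendsto_const_nhds (x := z)).add this
      simpa using this
  have := hEqU.of_subset_closure hcont continuousOn_const hUS hScl
  intro z hz
  exact this hz
end

section
/- Let ρ and σ be positive semidefinite n×n complex matrices with trace 1 and with the support of ρ contained in the support of σ. For α > 1, define D̃_α(ρ‖σ) = (1/(α-1)) log Tr[(σ^((1-α)/(2α)) ρ σ^((1-α)/(2α)))^α], where powers of σ are taken on its support. Then D̃_α(ρ‖σ) ≥ 0, with equality if and only if ρ = σ. -/
open Matrix
open scoped ComplexOrder

/-- Real power of a Hermitian matrix via the spectral theorem (junk value `0` if not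
Hermitian). Powers are taken on the support: zero eigenvalues are sent to `0 ^ t`. -/
noncomputable def Matrix.rpowH {m : Type*} [Fintype m] [DecidableEq m]
    (A : Matrix m m ℂ) (t : ℝ) : Matrix m m ℂ :=
  if hA : A.IsHermitian then
    (hA.eigenvectorUnitary : Matrix m m ℂ) *
      Matrix.diagonal (fun i => ((hA.eigenvalues i ^ t : ℝ) : ℂ)) *
      star (hA.eigenvectorUnitary : Matrix m m ℂ)
  else 0

/-- The sandwiched Rényi relative `α`-entropy
`D̃_α(ρ‖σ) = (α-1)⁻¹ log Tr[(σ^((1-α)/(2α)) ρ σ^((1-α)/(2α)))^α]`. -/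
noncomputable def sandwichedRenyi {m : Type*} [Fintype m] [DecidableEq m]
    (α : ℝ) (ρ σ : Matrix m m ℂ) : ℝ :=
  (α - 1)⁻¹ *
    Real.log (Matrix.trace
      (Matrix.rpowH (Matrix.rpowH σ ((1 - α) / (2 * α)) * ρ *
        Matrix.rpowH σ ((1 - α) / (2 * α))) α)).re


/-
Put `A = σ^((1-α)/2α) ρ σ^((1-α)/2α)` and `B = σ^(1/α')`, where `α' = α/(α-1)` is the conjugate
exponent. Since `supp ρ ⊆ supp σ`, `Tr (A B) = Tr ρ = 1`, and `B^α' = σ`. Young's inequality for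
traces, `Tr (A B) ≤ Tr A^α / α + Tr B^α' / α'`, then gives `Tr A^α ≥ 1`, i.e. `D̃_α(ρ‖σ) ≥ 0`.
The trace inequality reduces to the scalar one: in eigenbases `(uᵢ)` of `A` and `(vⱼ)` of `B`
both sides are averages of `λᵢ μⱼ` and `λᵢ^α / α + μⱼ^α' / α'` against the doubly stochastic weights
`|⟨uᵢ, vⱼ⟩|²`. Equality forces `λᵢ^α = μⱼ^α'` whenever `⟨uᵢ, vⱼ⟩ ≠ 0`, hence `A^α = B^α' = σ`;
so `A = σ^(1/α)`, and undoing the sandwich on the support of `σ` gives `ρ = σ`.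
-/

open scoped MatrixOrder

namespace Matrix

variable {n : Type*} [Fintype n] [DecidableEq n]

protected lemma cfc_mul (A : Matrix n n ℂ) (f g : ℝ → ℝ) :
    cfc (fun x => f x * g x) A = cfc f A * cfc g A :=
  cfc_mul f g A (A.finite_real_spectrum.continuousOn f) (A.finite_real_spectrum.continuousOn g)

protected lemma cfc_comp {A : Matrix n n ℂ} (hA : A.IsHermitian) (g f : ℝ → ℝ) :
    cfc (fun x => g (f x)) A = cfc g (cfc f A) :=
  cfc_comp' g f A ((A.finite_real_spectrum.image f).continuousOn g)
    (A.finite_real_spectrum.continuousOn f) hA.isSelfAdjoint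

lemma IsHermitian.rpowH_eq_cfc {A : Matrix n n ℂ} (hA : A.IsHermitian) (t : ℝ) :
    A.rpowH t = cfc (fun x : ℝ => x ^ t) A := by
  rw [hA.cfc_eq, IsHermitian.cfc, Unitary.conjStarAlgAut_apply, rpowH, dif_pos hA]
  rfl

lemma PosSemidef.pos_of_mem_spectrum {A : Matrix n n ℂ} (hA : A.PosSemidef) {x : ℝ}
    (hx : x ∈ spectrum ℝ A) (hx0 : x ≠ 0) : 0 < x :=
  (spectrum_nonneg_of_nonneg hA.nonneg hx).lt_of_ne' hx0

lemma PosSemidef.cfc_rpow_cfc_rpow {A : Matrix n n ℂ} (hA : A.PosSemidef) {s t : ℝ}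
    (hst : s * t = 1) : cfc (fun x : ℝ => x ^ t) (cfc (fun x : ℝ => x ^ s) A) = A := by
  rw [← Matrix.cfc_comp hA.1]
  conv_rhs => rw [← cfc_id' ℝ A hA.1.isSelfAdjoint]
  exact cfc_congr fun x hx => by
    rw [← Real.rpow_mul (spectrum_nonneg_of_nonneg hA.nonneg hx), hst, Real.rpow_one]

lemma trace_diagonal_mul_mul_diagonal_mul_star (W : Matrix n n ℂ) (a b : n → ℝ) :
    (diagonal (fun i => (a i : ℂ)) * W * diagonal (fun j => (b j : ℂ)) * star W).trace =
      ((∑ i, ∑ j, a i * b j * Complex.normSq (W i j) : ℝ) : ℂ) := by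
  have hentry : ∀ i j, (diagonal (fun i => (a i : ℂ)) * W * diagonal (fun j => (b j : ℂ))) i j =
      a i * W i j * b j := by simp [diagonal_mul, mul_diagonal]
  simp only [trace, diag, mul_apply (M := _ * W * _), hentry, star_apply]
  push_cast
  refine Finset.sum_congr rfl fun i _ => Finset.sum_congr rfl fun j _ => ?_
  rw [Complex.normSq_eq_conj_mul_self, Complex.star_def]
  ring

namespace IsHermitian

variable {A B : Matrix n n ℂ} (hA : A.IsHermitian) (hB : B.IsHermitian)

noncomputable def eigenOverlap (i j : n) : ℝ :=
  Complex.normSq ((star (hA.eigenvectorUnitary : Matrix n n ℂ) * hB.eigenvectorUnitary) i j)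

lemma cfc_eq_mul_diagonal_mul (f : ℝ → ℝ) :
    cfc f A = (hA.eigenvectorUnitary : Matrix n n ℂ) *
      diagonal (fun i => (f (hA.eigenvalues i) : ℂ)) *
        star (hA.eigenvectorUnitary : Matrix n n ℂ) := by
  rw [hA.cfc_eq, IsHermitian.cfc, Unitary.conjStarAlgAut_apply]
  rfl

lemma trace_cfc_mul_cfc (f g : ℝ → ℝ) :
    (cfc f A * cfc g B).trace = ((∑ i, ∑ j,
      f (hA.eigenvalues i) * g (hB.eigenvalues j) * hA.eigenOverlap hB i j : ℝ) : ℂ) := by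
  simp only [eigenOverlap]
  rw [← trace_diagonal_mul_mul_diagonal_mul_star, hA.cfc_eq_mul_diagonal_mul,
    hB.cfc_eq_mul_diagonal_mul, star_mul, star_star]
  simp only [mul_assoc]
  rw [trace_mul_comm]
  simp only [mul_assoc]

lemma cfc_eq_cfc_of_eigenOverlap {f g : ℝ → ℝ}
    (h : ∀ i j, hA.eigenOverlap hB i j ≠ 0 → f (hA.eigenvalues i) = g (hB.eigenvalues j)) :
    cfc f A = cfc g B := by
  set U := (hA.eigenvectorUnitary : Matrix n n ℂ)
  set V := (hB.eigenvectorUnitary : Matrix n n ℂ)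
  have hcomm : diagonal (fun i => (f (hA.eigenvalues i) : ℂ)) * (star U * V) =
      (star U * V) * diagonal (fun j => (g (hB.eigenvalues j) : ℂ)) := by
    ext i j
    rw [diagonal_mul, mul_diagonal]
    by_cases hW : (star U * V) i j = 0
    · simp [hW]
    · rw [h i j (by simpa [eigenOverlap] using hW), mul_comm]
  have hU : U * star U = 1 := Unitary.coe_mul_star_self hA.eigenvectorUnitary
  have hV : V * star V = 1 := Unitary.coe_mul_star_self hB.eigenvectorUnitary
  calc cfc f A
        = U * diagonal (fun i => (f (hA.eigenvalues i) : ℂ)) * (star U * V * star V) := by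
        rw [hA.cfc_eq_mul_diagonal_mul, mul_assoc _ V, hV, mul_one]
    _ = U * (diagonal (fun i => (f (hA.eigenvalues i) : ℂ)) * (star U * V)) * star V := by
        simp only [mul_assoc]
    _ = (U * star U) * V * diagonal (fun j => (g (hB.eigenvalues j) : ℂ)) * star V := by
        rw [hcomm]; simp only [mul_assoc]
    _ = cfc g B := by rw [hU, one_mul, hB.cfc_eq_mul_diagonal_mul]

lemma re_trace_mul_eq_sum : (A * B).trace.re =
    ∑ i, ∑ j, hA.eigenvalues i * hB.eigenvalues j * hA.eigenOverlap hB i j := by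
  have h := hA.trace_cfc_mul_cfc hB id id
  rw [cfc_id ℝ A hA.isSelfAdjoint, cfc_id ℝ B hB.isSelfAdjoint] at h
  rw [h, Complex.ofReal_re]
  rfl

lemma re_trace_cfc_eq_sum_left (f : ℝ → ℝ) :
    (cfc f A).trace.re = ∑ i, ∑ j, f (hA.eigenvalues i) * hA.eigenOverlap hB i j := by
  have h := hA.trace_cfc_mul_cfc hB f (fun _ => 1)
  rw [cfc_const_one ℝ B hB.isSelfAdjoint, mul_one] at h
  simp [h]

lemma re_trace_cfc_eq_sum_right (g : ℝ → ℝ) :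
    (cfc g B).trace.re = ∑ i, ∑ j, g (hB.eigenvalues j) * hA.eigenOverlap hB i j := by
  have h := hA.trace_cfc_mul_cfc hB (fun _ => 1) g
  rw [cfc_const_one ℝ A hA.isSelfAdjoint, one_mul] at h
  simp [h]

lemma young_gap_eq_sum (p q : ℝ) :
    (cfc (fun x : ℝ => x ^ p) A).trace.re / p + (cfc (fun x : ℝ => x ^ q) B).trace.re / q -
      (A * B).trace.re =
      ∑ i, ∑ j, hA.eigenOverlap hB i j * (hA.eigenvalues i ^ p / p + hB.eigenvalues j ^ q / q -
        hA.eigenvalues i * hB.eigenvalues j) := by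
  rw [hA.re_trace_cfc_eq_sum_left hB, hA.re_trace_cfc_eq_sum_right hB, hA.re_trace_mul_eq_sum hB]
  simp only [Finset.sum_div, ← Finset.sum_add_distrib, ← Finset.sum_sub_distrib]
  refine Finset.sum_congr rfl fun i _ => Finset.sum_congr rfl fun j _ => ?_
  ring

end IsHermitian

namespace PosSemidef

variable {A B : Matrix n n ℂ} (hA : A.PosSemidef) (hB : B.PosSemidef) {p q : ℝ}
include hA hB

lemma young_gap_term_nonneg (hpq : p.HolderConjugate q) (i j : n) :
    0 ≤ hA.1.eigenOverlap hB.1 i j * (hA.1.eigenvalues i ^ p / p + hB.1.eigenvalues j ^ q / q -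
      hA.1.eigenvalues i * hB.1.eigenvalues j) :=
  mul_nonneg (Complex.normSq_nonneg _) <| sub_nonneg.2 <|
    Real.young_inequality_of_nonneg (hA.eigenvalues_nonneg i) (hB.eigenvalues_nonneg j) hpq

theorem re_trace_mul_le_young (hpq : p.HolderConjugate q) :
    (A * B).trace.re ≤
      (cfc (fun x : ℝ => x ^ p) A).trace.re / p + (cfc (fun x : ℝ => x ^ q) B).trace.re / q := by
  rw [← sub_nonneg, hA.1.young_gap_eq_sum hB.1]
  exact Finset.sum_nonneg fun i _ => Finset.sum_nonneg fun j _ =>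
    young_gap_term_nonneg hA hB hpq i j

theorem cfc_rpow_eq_of_re_trace_mul_eq_young (hpq : p.HolderConjugate q)
    (h : (A * B).trace.re =
      (cfc (fun x : ℝ => x ^ p) A).trace.re / p + (cfc (fun x : ℝ => x ^ q) B).trace.re / q) :
    cfc (fun x : ℝ => x ^ p) A = cfc (fun x : ℝ => x ^ q) B := by
  have hgap := hA.1.young_gap_eq_sum hB.1 p q
  rw [← h, sub_self] at hgap
  have hterm : ∀ i j, hA.1.eigenOverlap hB.1 i j * (hA.1.eigenvalues i ^ p / p +
      hB.1.eigenvalues j ^ q / q - hA.1.eigenvalues i * hB.1.eigenvalues j) = 0 := fun i j =>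
    (Finset.sum_eq_zero_iff_of_nonneg fun j _ => young_gap_term_nonneg hA hB hpq i j).1
      ((Finset.sum_eq_zero_iff_of_nonneg fun i _ => Finset.sum_nonneg fun j _ =>
        young_gap_term_nonneg hA hB hpq i j).1 hgap.symm i (Finset.mem_univ i))
      j (Finset.mem_univ j)
  refine hA.1.cfc_eq_cfc_of_eigenOverlap hB.1 fun i j hw => ?_
  have hyoung := (mul_eq_zero.1 (hterm i j)).resolve_left hw
  exact (Real.young_inequality_eq_iff_of_nonneg (hA.eigenvalues_nonneg i)
    (hB.eigenvalues_nonneg j) hpq).1 (by linarith)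

end PosSemidef

variable {ρ σ : Matrix n n ℂ}

section Support

variable (hσ : σ.IsHermitian) (hsupp : ∀ v, σ *ᵥ v = 0 → ρ *ᵥ v = 0) {χ : ℝ → ℝ}
  (hχ : ∀ x ∈ spectrum ℝ σ, x ≠ 0 → χ x = 1)
include hσ hsupp hχ

lemma mul_cfc_eq_self_of_ker_le : ρ * cfc χ σ = ρ := by
  have hσχ : σ * cfc (fun x => χ x - 1) σ = 0 := by
    calc σ * cfc (fun x => χ x - 1) σ
          = cfc (fun x : ℝ => x) σ * cfc (fun x => χ x - 1) σ := by
          rw [cfc_id' ℝ σ hσ.isSelfAdjoint]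
      _ = cfc (0 : ℝ → ℝ) σ := by
          rw [← Matrix.cfc_mul]
          refine cfc_congr fun x hx => ?_
          by_cases hx0 : x = 0
          · simp [hx0]
          · simp [hχ x hx hx0]
      _ = 0 := cfc_zero ℝ σ
  have hρχ : ρ * cfc (fun x => χ x - 1) σ = 0 := by
    rw [ext_iff_mulVec]
    intro v
    rw [← mulVec_mulVec, hsupp _ (by rw [mulVec_mulVec, hσχ, zero_mulVec]), zero_mulVec]
  have hχ1 : cfc χ σ = cfc (fun x => χ x - 1) σ + 1 := by
    rw [← map_one (algebraMap ℝ (Matrix n n ℂ)), ← cfc_add_const _ _ _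
      (σ.finite_real_spectrum.continuousOn _) hσ.isSelfAdjoint]
    simp
  rw [hχ1, mul_add, hρχ, zero_add, mul_one]

lemma cfc_mul_eq_self_of_ker_le (hρ : ρ.IsHermitian) : cfc χ σ * ρ = ρ := by
  have hχH : (cfc χ σ).IsHermitian := cfc_predicate χ σ
  simpa only [conjTranspose_mul, hχH.eq, hρ.eq] using
    congrArg conjTranspose (mul_cfc_eq_self_of_ker_le hσ hsupp hχ)

end Support

noncomputable def renyiSandwich (α : ℝ) (ρ σ : Matrix n n ℂ) : Matrix n n ℂ :=
  cfc (fun x : ℝ => x ^ ((1 - α) / (2 * α))) σ * ρ *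
    cfc (fun x : ℝ => x ^ ((1 - α) / (2 * α))) σ

noncomputable def sandwichedQuasiEntropy (α : ℝ) (ρ σ : Matrix n n ℂ) : ℝ :=
  (cfc (fun x : ℝ => x ^ α) (renyiSandwich α ρ σ)).trace.re

lemma PosSemidef.renyiSandwich (hρ : ρ.PosSemidef) (α : ℝ) (σ : Matrix n n ℂ) :
    (renyiSandwich α ρ σ).PosSemidef := by
  set T := cfc (fun x : ℝ => x ^ ((1 - α) / (2 * α))) σ
  have hT : T.IsHermitian := cfc_predicate _ σ
  have h := hρ.conjTranspose_mul_mul_same T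
  rwa [hT.eq] at h

lemma sandwichedRenyi_eq_log (hρ : ρ.PosSemidef) (hσ : σ.IsHermitian) (α : ℝ) :
    sandwichedRenyi α ρ σ = (α - 1)⁻¹ * Real.log (sandwichedQuasiEntropy α ρ σ) := by
  have h := (hρ.renyiSandwich α σ).1.rpowH_eq_cfc α
  rw [renyiSandwich] at h
  rw [sandwichedRenyi, hσ.rpowH_eq_cfc, h]
  rfl

lemma trace_renyiSandwich_mul_cfc_rpow (hσ : σ.PosSemidef)
    (hsupp : ∀ v, σ *ᵥ v = 0 → ρ *ᵥ v = 0) (α : ℝ) :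
    (renyiSandwich α ρ σ * cfc (fun x : ℝ => x ^ α.conjExponent⁻¹) σ).trace = ρ.trace := by
  have hχ : ∀ x ∈ spectrum ℝ σ, x ≠ 0 → x ^ ((1 - α) / (2 * α)) *
      (x ^ α.conjExponent⁻¹ * x ^ ((1 - α) / (2 * α))) = 1 := fun x hx hx0 => by
    have hx := hσ.pos_of_mem_spectrum hx hx0
    rw [← Real.rpow_add hx, ← Real.rpow_add hx, Real.conjExponent, inv_div]
    convert Real.rpow_zero x using 2
    ring
  simp only [renyiSandwich, mul_assoc]
  rw [trace_mul_comm]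
  simp only [mul_assoc]
  rw [← Matrix.cfc_mul, ← Matrix.cfc_mul, mul_cfc_eq_self_of_ker_le hσ.1 hsupp hχ]

theorem renyiSandwich_eq_cfc_rpow_inv_iff (hρ : ρ.IsHermitian) (hσ : σ.PosSemidef)
    (hsupp : ∀ v, σ *ᵥ v = 0 → ρ *ᵥ v = 0) {α : ℝ} (hα : 1 < α) :
    renyiSandwich α ρ σ = cfc (fun x : ℝ => x ^ α⁻¹) σ ↔ ρ = σ := by
  set c := (1 - α) / (2 * α) with hcdef
  have hc : c ≠ 0 := div_ne_zero (by linarith) (by positivity)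
  have hα0 : α ≠ 0 := by linarith
  constructor
  · intro h
    have hχ : ∀ x ∈ spectrum ℝ σ, x ≠ 0 → x ^ (-c) * x ^ c = 1 := fun x hx hx0 => by
      rw [← Real.rpow_add (hσ.pos_of_mem_spectrum hx hx0), neg_add_cancel, Real.rpow_zero]
    have hχ' : ∀ x ∈ spectrum ℝ σ, x ≠ 0 → x ^ c * x ^ (-c) = 1 := fun x hx hx0 => by
      rw [mul_comm, hχ x hx hx0]
    set S := cfc (fun x : ℝ => x ^ (-c)) σ
    calc ρ = S * renyiSandwich α ρ σ * S := by
          rw [renyiSandwich, ← mul_assoc, ← mul_assoc, ← Matrix.cfc_mul,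
            cfc_mul_eq_self_of_ker_le hσ.1 hsupp hχ hρ, mul_assoc, ← Matrix.cfc_mul,
            mul_cfc_eq_self_of_ker_le hσ.1 hsupp hχ']
      _ = cfc (fun x : ℝ => x ^ (-c) * x ^ α⁻¹ * x ^ (-c)) σ := by
          rw [h, Matrix.cfc_mul, Matrix.cfc_mul]
      _ = σ := by
          conv_rhs => rw [← cfc_id' ℝ σ hσ.1.isSelfAdjoint]
          refine cfc_congr fun x hx => ?_
          rcases (spectrum_nonneg_of_nonneg hσ.nonneg hx).eq_or_lt with hx0 | hx0
          · simp [← hx0, Real.zero_rpow (neg_ne_zero.2 hc)]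
          · rw [← Real.rpow_add hx0, ← Real.rpow_add hx0]
            convert Real.rpow_one x using 2
            rw [hcdef]
            field_simp
            ring
  · rintro rfl
    calc renyiSandwich α ρ ρ = cfc (fun x : ℝ => x ^ c * x * x ^ c) ρ := by
          rw [Matrix.cfc_mul, Matrix.cfc_mul, cfc_id' ℝ ρ hρ.isSelfAdjoint]
          rfl
      _ = cfc (fun x : ℝ => x ^ α⁻¹) ρ := by
          refine cfc_congr fun x hx => ?_
          rcases (spectrum_nonneg_of_nonneg hσ.nonneg hx).eq_or_lt with hx0 | hx0
          · simp [← hx0, Real.zero_rpow (inv_ne_zero hα0)]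
          · rw [← Real.rpow_add_one hx0.ne', ← Real.rpow_add hx0, hcdef]
            congr 1
            field_simp
            ring

section Young

variable (hρ : ρ.PosSemidef) (hσ : σ.PosSemidef) (hρ1 : ρ.trace = 1) (hσ1 : σ.trace = 1)
  (hsupp : ∀ v, σ *ᵥ v = 0 → ρ *ᵥ v = 0) {α : ℝ} (hα : 1 < α)
include hρ hσ hρ1 hσ1 hsupp hα

lemma sandwichedQuasiEntropy_young :
    1 ≤ sandwichedQuasiEntropy α ρ σ / α + α.conjExponent⁻¹ ∧
      (1 = sandwichedQuasiEntropy α ρ σ / α + α.conjExponent⁻¹ →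
        cfc (fun x : ℝ => x ^ α) (renyiSandwich α ρ σ) = σ) := by
  have hpq := Real.HolderConjugate.conjExponent hα
  have hB : (cfc (fun x : ℝ => x ^ α.conjExponent⁻¹) σ).PosSemidef :=
    nonneg_iff_posSemidef.1 <| cfc_nonneg fun x hx =>
      Real.rpow_nonneg (spectrum_nonneg_of_nonneg hσ.nonneg hx) _
  have hBq := hσ.cfc_rpow_cfc_rpow (inv_mul_cancel₀ hpq.symm.ne_zero)
  have hAB := trace_renyiSandwich_mul_cfc_rpow hσ hsupp α
  rw [hρ1] at hAB
  have hyoung := (hρ.renyiSandwich α σ).re_trace_mul_le_young hB hpq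
  have heq := (hρ.renyiSandwich α σ).cfc_rpow_eq_of_re_trace_mul_eq_young hB hpq
  rw [hAB, hBq, hσ1] at hyoung heq
  simp only [Complex.one_re, one_div] at hyoung heq
  exact ⟨hyoung, heq⟩

theorem one_le_sandwichedQuasiEntropy : 1 ≤ sandwichedQuasiEntropy α ρ σ := by
  have h := (sandwichedQuasiEntropy_young hρ hσ hρ1 hσ1 hsupp hα).1
  rwa [← (Real.HolderConjugate.conjExponent hα).inv_add_inv_eq_one, add_le_add_iff_right,
    inv_eq_one_div, div_le_div_iff_of_pos_right (by linarith)] at h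

theorem sandwichedQuasiEntropy_eq_one_iff :
    sandwichedQuasiEntropy α ρ σ = 1 ↔
      renyiSandwich α ρ σ = cfc (fun x : ℝ => x ^ α⁻¹) σ := by
  have hα0 : α ≠ 0 := by linarith
  have hA := hρ.renyiSandwich α σ
  constructor
  · intro hQ
    have hrpow := (sandwichedQuasiEntropy_young hρ hσ hρ1 hσ1 hsupp hα).2 <| by
      rw [hQ, ← inv_eq_one_div, (Real.HolderConjugate.conjExponent hα).inv_add_inv_eq_one]
    rw [← hA.cfc_rpow_cfc_rpow (mul_inv_cancel₀ hα0), hrpow]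
  · intro h
    rw [sandwichedQuasiEntropy, h, hσ.cfc_rpow_cfc_rpow (inv_mul_cancel₀ hα0), hσ1, Complex.one_re]

end Young

end Matrix

/-- Positivity of the sandwiched Rényi relative entropy, with equality iff `ρ = σ`. -/
theorem sandwichedRenyi_nonneg_and_eq_zero_iff {n : ℕ}
    (ρ σ : Matrix (Fin n) (Fin n) ℂ) (hρ : ρ.PosSemidef) (hσ : σ.PosSemidef)
    (hρ1 : ρ.trace = 1) (hσ1 : σ.trace = 1)
    (hsupp : ∀ v : Fin n → ℂ, σ.mulVec v = 0 → ρ.mulVec v = 0)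
    (α : ℝ) (hα : 1 < α) :
    0 ≤ sandwichedRenyi α ρ σ ∧ (sandwichedRenyi α ρ σ = 0 ↔ ρ = σ) := by
  have hQ := one_le_sandwichedQuasiEntropy hρ hσ hρ1 hσ1 hsupp hα
  have hα1 : 0 < (α - 1)⁻¹ := inv_pos.2 (sub_pos.2 hα)
  rw [sandwichedRenyi_eq_log hρ hσ.1]
  refine ⟨mul_nonneg hα1.le (Real.log_nonneg hQ), ?_⟩
  rw [mul_eq_zero, or_iff_right hα1.ne', Real.log_eq_zero, or_iff_right (by linarith),
    or_iff_left (by linarith), sandwichedQuasiEntropy_eq_one_iff hρ hσ hρ1 hσ1 hsupp hα,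
    renyiSandwich_eq_cfc_rpow_inv_iff hρ.1 hσ hsupp hα]
end

section
/- Let ρ, σ be density matrices on ℂⁿ with supp(ρ) ⊆ supp(σ). For α > 1, D̃_α(ρ‖σ) ≥ D_{2-1/α}(ρ‖σ), where D_β(ρ‖σ) = (1/(β-1)) log Tr(ρ^β σ^(1-β)) is the standard Rényi divergence. -/
open Matrix
open scoped ComplexOrder

/-- The standard (Petz) Rényi relative `β`-entropy
`D_β(ρ‖σ) = (β-1)⁻¹ log Tr(ρ^β σ^(1-β))`. -/
noncomputable def petzRenyi {m : Type*} [Fintype m] [DecidableEq m]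
    (β : ℝ) (ρ σ : Matrix m m ℂ) : ℝ :=
  (β - 1)⁻¹ * Real.log (Matrix.trace (Matrix.rpowH ρ β * Matrix.rpowH σ (1 - β))).re


/-!
Put `N = ρ^{1/2} σ^{(1-α)/(2α)}`. Then `σ^{(1-α)/(2α)} ρ σ^{(1-α)/(2α)} = N†N`, which has the same
eigenvalues as `NN†`, while `Tr ρ^{2-1/α} σ^{1/α-1} = Tr (NN† ρ^{1-1/α})`. In eigenbases `uᵢ` of
`NN†` and `vⱼ` of `ρ` this trace is `∑ᵢⱼ λᵢ μⱼ^{1-1/α} ‖⟪uᵢ, vⱼ⟫‖²`, and the weights `‖⟪uᵢ, vⱼ⟫‖²`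
form a doubly stochastic matrix, so Hölder's inequality with exponents `α` and `α/(α-1)` bounds it
by `(Tr (NN†)^α)^{1/α} (Tr ρ)^{1-1/α}`, where `Tr ρ = 1`. Taking logarithms gives the claim; the
support condition keeps the Petz trace positive, so that its logarithm is not a junk value.
-/

namespace Matrix

variable {m : Type*} [Fintype m] [DecidableEq m]

theorem sum_mul_mul_le_of_mem_doublyStochastic {w : Matrix m m ℝ} (hw : w ∈ doublyStochastic ℝ m)
    {a b : m → ℝ} (ha : ∀ i, 0 ≤ a i) (hb : ∀ j, 0 ≤ b j) {p q : ℝ} (hpq : p.HolderConjugate q) :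
    ∑ i, ∑ j, a i * b j * w i j ≤ (∑ i, a i ^ p) ^ (1 / p) * (∑ j, b j ^ q) ^ (1 / q) := by
  have hw0 : ∀ i j, 0 ≤ w i j := fun i j => nonneg_of_mem_doublyStochastic hw
  -- Hölder on `m × m`, splitting each weight as `w i j = w i j ^ (1/p) * w i j ^ (1/q)`.
  have holder := Real.inner_le_Lp_mul_Lq_of_nonneg (Finset.univ : Finset (m × m)) hpq
    (f := fun x => a x.1 * w x.1 x.2 ^ (1 / p)) (g := fun x => b x.2 * w x.1 x.2 ^ (1 / q))
    (fun x _ => mul_nonneg (ha _) (Real.rpow_nonneg (hw0 _ _) _))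
    (fun x _ => mul_nonneg (hb _) (Real.rpow_nonneg (hw0 _ _) _))
  have hsplit : ∀ i j, w i j ^ (1 / p) * w i j ^ (1 / q) = w i j := fun i j => by
    rw [← Real.rpow_add' (hw0 i j) (by simp [hpq.inv_add_inv_eq_one]), one_div, one_div,
      hpq.inv_add_inv_eq_one, Real.rpow_one]
  have hpow : ∀ {r : ℝ}, r ≠ 0 → ∀ c, 0 ≤ c → ∀ i j, (c * w i j ^ (1 / r)) ^ r = c ^ r * w i j :=
    fun hr c hc i j => by
      rw [Real.mul_rpow hc (Real.rpow_nonneg (hw0 i j) _), ← Real.rpow_mul (hw0 i j),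
        one_div_mul_cancel hr, Real.rpow_one]
  simp only [Fintype.sum_prod_type, hpow hpq.ne_zero _ (ha _), hpow hpq.symm.ne_zero _ (hb _),
    ← Finset.mul_sum, sum_row_of_mem_doublyStochastic hw, mul_one] at holder
  rw [Finset.sum_comm (f := fun i j => b j ^ q * w i j)] at holder
  simp only [← Finset.mul_sum, sum_col_of_mem_doublyStochastic hw, mul_one] at holder
  refine le_of_eq_of_le (Finset.sum_congr rfl fun i _ => Finset.sum_congr rfl fun j _ => ?_) holder
  rw [mul_mul_mul_comm, hsplit]

variable {A B : Matrix m m ℂ}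

theorem IsHermitian.rpowH_eq (hA : A.IsHermitian) (t : ℝ) :
    A.rpowH t = (hA.eigenvectorUnitary : Matrix m m ℂ) *
      diagonal (fun i => ((hA.eigenvalues i ^ t : ℝ) : ℂ)) *
      star (hA.eigenvectorUnitary : Matrix m m ℂ) :=
  dif_pos hA

theorem isHermitian_rpowH (A : Matrix m m ℂ) (t : ℝ) : (A.rpowH t).IsHermitian := by
  unfold rpowH
  split_ifs
  · exact isHermitian_mul_mul_conjTranspose _
      (isHermitian_diagonal_iff.mpr fun i => Complex.conj_ofReal _)
  · exact isHermitian_zero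

theorem IsHermitian.rpowH_one (hA : A.IsHermitian) : A.rpowH 1 = A := by
  simp only [hA.rpowH_eq, Real.rpow_one]
  conv_rhs => rw [hA.spectral_theorem]
  rfl

/-- Since `(0 : ℝ) ^ (0 : ℝ) = 1`, `A.rpowH 0 = 1` rather than the support projection of `A`;
this is what `hst` excludes. -/
theorem PosSemidef.rpowH_mul_rpowH (hA : A.PosSemidef) {s t : ℝ} (hst : s + t ≠ 0) :
    A.rpowH s * A.rpowH t = A.rpowH (s + t) := by
  simp only [hA.1.rpowH_eq, mul_assoc]
  rw [← mul_assoc (star _) _, Unitary.coe_star_mul_self, one_mul, ← mul_assoc (diagonal _),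
    diagonal_mul_diagonal]
  simp only [← Complex.ofReal_mul, ← Real.rpow_add' (hA.eigenvalues_nonneg _) hst]

theorem IsHermitian.trace_rpowH (hA : A.IsHermitian) (t : ℝ) :
    (A.rpowH t).trace = ∑ i, ((hA.eigenvalues i ^ t : ℝ) : ℂ) := by
  rw [hA.rpowH_eq, trace_mul_cycle, Unitary.coe_star_mul_self, one_mul, trace_diagonal]

theorem PosSemidef.re_trace_rpowH_nonneg (hA : A.PosSemidef) (t : ℝ) :
    0 ≤ (A.rpowH t).trace.re := by
  rw [hA.1.trace_rpowH, Complex.re_sum]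
  exact Finset.sum_nonneg fun i _ => Real.rpow_nonneg (hA.eigenvalues_nonneg i) t

theorem trace_rpowH_conjTranspose_mul_self (N : Matrix m m ℂ) (t : ℝ) :
    ((Nᴴ * N).rpowH t).trace = ((N * Nᴴ).rpowH t).trace := by
  have h₁ := isHermitian_conjTranspose_mul_self N
  have h₂ := isHermitian_mul_conjTranspose_self N
  rw [h₁.trace_rpowH, h₂.trace_rpowH,
    (h₁.eigenvalues_eq_eigenvalues_iff h₂).2 (charpoly_mul_comm _ _)]

noncomputable def IsHermitian.eigenOverlap_s7 (hA : A.IsHermitian) (hB : B.IsHermitian) :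
    Matrix m m ℝ :=
  of fun i j => ‖inner ℂ (hA.eigenvectorBasis i) (hB.eigenvectorBasis j)‖ ^ 2

theorem IsHermitian.eigenOverlap_mem_doublyStochastic (hA : A.IsHermitian) (hB : B.IsHermitian) :
    hA.eigenOverlap_s7 hB ∈ doublyStochastic ℝ m := by
  refine mem_doublyStochastic_iff_sum.2 ⟨fun _ _ => sq_nonneg _, fun i => ?_, fun j => ?_⟩
  · simp [eigenOverlap_s7, OrthonormalBasis.sum_sq_norm_inner_left]
  · simp [eigenOverlap_s7, OrthonormalBasis.sum_sq_norm_inner_right]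

theorem IsHermitian.eigenOverlap_eq_zero (hA : A.IsHermitian) (hB : B.IsHermitian)
    (hker : ∀ v, B *ᵥ v = 0 → A *ᵥ v = 0) {i j : m} (hi : hA.eigenvalues i ≠ 0)
    (hj : hB.eigenvalues j = 0) : hA.eigenOverlap_s7 hB i j = 0 := by
  have hAv : A *ᵥ ⇑(hB.eigenvectorBasis j) = 0 :=
    hker _ (by rw [hB.mulVec_eigenvectorBasis, hj, zero_smul])
  have h : (hA.eigenvalues i : ℂ) * inner ℂ (hA.eigenvectorBasis i) (hB.eigenvectorBasis j) = 0 :=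
    calc _ = ⇑(hB.eigenvectorBasis j) ⬝ᵥ star (A *ᵥ ⇑(hA.eigenvectorBasis i)) := by
          simp [hA.mulVec_eigenvectorBasis, EuclideanSpace.inner_eq_star_dotProduct,
            dotProduct_smul]
      _ = (A *ᵥ ⇑(hB.eigenvectorBasis j)) ⬝ᵥ star ⇑(hA.eigenvectorBasis i) := by
          rw [star_mulVec, hA.eq, dotProduct_comm, ← dotProduct_mulVec, dotProduct_comm]
      _ = 0 := by rw [hAv, zero_dotProduct]
  simp [eigenOverlap_s7, (mul_eq_zero.1 h).resolve_left (by exact_mod_cast hi)]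

theorem IsHermitian.trace_rpowH_mul_rpowH (hA : A.IsHermitian) (hB : B.IsHermitian) (s t : ℝ) :
    (A.rpowH s * B.rpowH t).trace =
      ∑ i, ∑ j,
        ((hA.eigenvalues i ^ s * hB.eigenvalues j ^ t * hA.eigenOverlap_s7 hB i j : ℝ) : ℂ) := by
  set W : Matrix m m ℂ := star (hA.eigenvectorUnitary : Matrix m m ℂ) * hB.eigenvectorUnitary
  have hW : ∀ i j, W i j = inner ℂ (hA.eigenvectorBasis i) (hB.eigenvectorBasis j) := fun i j => by
    simp [W, mul_apply, EuclideanSpace.inner_eq_star_dotProduct, dotProduct, mul_comm]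
  have hcycle : (A.rpowH s * B.rpowH t).trace =
      (diagonal (fun i => ((hA.eigenvalues i ^ s : ℝ) : ℂ)) * W *
        diagonal (fun j => ((hB.eigenvalues j ^ t : ℝ) : ℂ)) * Wᴴ).trace := by
    rw [hA.rpowH_eq, hB.rpowH_eq, ← star_eq_conjTranspose, star_mul, star_star]
    simp only [mul_assoc]
    rw [trace_mul_comm (hA.eigenvectorUnitary : Matrix m m ℂ)]
    simp only [W, mul_assoc]
  rw [hcycle, trace]
  refine Finset.sum_congr rfl fun i _ => ?_
  rw [diag_apply, mul_apply]
  refine Finset.sum_congr rfl fun j _ => ?_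
  rw [mul_diagonal, diagonal_mul, conjTranspose_apply, hW, eigenOverlap_s7, of_apply]
  push_cast
  rw [← Complex.mul_conj', Complex.star_def]
  ring

theorem IsHermitian.re_trace_rpowH_mul_rpowH (hA : A.IsHermitian) (hB : B.IsHermitian)
    (s t : ℝ) :
    (A.rpowH s * B.rpowH t).trace.re =
      ∑ i, ∑ j, hA.eigenvalues i ^ s * hB.eigenvalues j ^ t * hA.eigenOverlap_s7 hB i j := by
  simp only [hA.trace_rpowH_mul_rpowH hB, Complex.re_sum, Complex.ofReal_re]

theorem PosSemidef.re_trace_rpowH_mul_rpowH_le (hA : A.PosSemidef) (hB : B.PosSemidef)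
    (s t : ℝ) {p q : ℝ} (hpq : p.HolderConjugate q) :
    (A.rpowH s * B.rpowH t).trace.re ≤ (∑ i, (hA.1.eigenvalues i ^ s) ^ p) ^ (1 / p) *
      (∑ j, (hB.1.eigenvalues j ^ t) ^ q) ^ (1 / q) := by
  rw [hA.1.re_trace_rpowH_mul_rpowH hB.1]
  exact sum_mul_mul_le_of_mem_doublyStochastic (hA.1.eigenOverlap_mem_doublyStochastic hB.1)
    (fun i => Real.rpow_nonneg (hA.eigenvalues_nonneg i) s)
    (fun j => Real.rpow_nonneg (hB.eigenvalues_nonneg j) t) hpq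

theorem PosSemidef.re_trace_rpowH_mul_rpowH_pos (hA : A.PosSemidef) (hB : B.PosSemidef)
    (hA0 : A ≠ 0) (hker : ∀ v, B *ᵥ v = 0 → A *ᵥ v = 0) (s t : ℝ) :
    0 < (A.rpowH s * B.rpowH t).trace.re := by
  have hw := hA.1.eigenOverlap_mem_doublyStochastic hB.1
  obtain ⟨i, hi⟩ : ∃ i, hA.1.eigenvalues i ≠ 0 := by
    by_contra! h
    exact hA0 (hA.1.eigenvalues_eq_zero_iff.1 (funext h))
  obtain ⟨j, -, hij⟩ : ∃ j ∈ Finset.univ, hA.1.eigenOverlap_s7 hB.1 i j ≠ 0 :=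
    Finset.exists_ne_zero_of_sum_ne_zero (by simp [sum_row_of_mem_doublyStochastic hw])
  have hj : hB.1.eigenvalues j ≠ 0 := fun hj => hij (hA.1.eigenOverlap_eq_zero hB.1 hker hi hj)
  have hterm : ∀ i j, 0 ≤ hA.1.eigenvalues i ^ s * hB.1.eigenvalues j ^ t *
      hA.1.eigenOverlap_s7 hB.1 i j := fun i j =>
    mul_nonneg (mul_nonneg (Real.rpow_nonneg (hA.eigenvalues_nonneg i) s)
      (Real.rpow_nonneg (hB.eigenvalues_nonneg j) t)) (nonneg_of_mem_doublyStochastic hw)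
  rw [hA.1.re_trace_rpowH_mul_rpowH hB.1]
  refine Finset.sum_pos' (fun i _ => Finset.sum_nonneg fun j _ => hterm i j)
    ⟨i, Finset.mem_univ _, Finset.sum_pos' (fun j _ => hterm i j) ⟨j, Finset.mem_univ _, ?_⟩⟩
  exact mul_pos (mul_pos (Real.rpow_pos_of_pos ((hA.eigenvalues_nonneg i).lt_of_ne' hi) s)
    (Real.rpow_pos_of_pos ((hB.eigenvalues_nonneg j).lt_of_ne' hj) t))
    ((nonneg_of_mem_doublyStochastic hw).lt_of_ne' hij)

variable {ρ σ : Matrix m m ℂ}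

theorem PosSemidef.rpowH_half_mul_self (hρ : ρ.PosSemidef) :
    ρ.rpowH (1 / 2) * ρ.rpowH (1 / 2) = ρ := by
  rw [hρ.rpowH_mul_rpowH (by norm_num), show (1 / 2 + 1 / 2 : ℝ) = 1 by norm_num, hρ.1.rpowH_one]

theorem PosSemidef.mul_mul_eq_conjTranspose_mul_self (hρ : ρ.PosSemidef) {S : Matrix m m ℂ}
    (hS : S.IsHermitian) : S * ρ * S = (ρ.rpowH (1 / 2) * S)ᴴ * (ρ.rpowH (1 / 2) * S) := by
  rw [conjTranspose_mul, hS.eq, (isHermitian_rpowH ρ _).eq]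
  conv_lhs => rw [← hρ.rpowH_half_mul_self]
  simp only [mul_assoc]

theorem PosSemidef.trace_mul_conjTranspose_mul_rpowH (hρ : ρ.PosSemidef) (hσ : σ.PosSemidef)
    {γ c : ℝ} (hγ : 0 ≤ γ) (hc : c ≠ 0) :
    ((ρ.rpowH (1 / 2) * σ.rpowH c) * (ρ.rpowH (1 / 2) * σ.rpowH c)ᴴ * ρ.rpowH γ).trace =
      (ρ.rpowH (γ + 1) * σ.rpowH (2 * c)).trace := by
  rw [trace_mul_comm (ρ.rpowH _), conjTranspose_mul, (isHermitian_rpowH ρ _).eq,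
    (isHermitian_rpowH σ _).eq, two_mul,
    ← hσ.rpowH_mul_rpowH (by contrapose! hc; linarith),
    show γ + 1 = 1 / 2 + γ + 1 / 2 by ring, ← hρ.rpowH_mul_rpowH (by linarith),
    ← hρ.rpowH_mul_rpowH (by linarith)]
  simp only [mul_assoc]
  rw [trace_mul_comm]
  simp only [mul_assoc]

theorem PosSemidef.re_trace_petz_le_sandwiched (hρ : ρ.PosSemidef) (hσ : σ.PosSemidef)
    (hρ1 : ρ.trace = 1) {α : ℝ} (hα : 1 < α) :
    (ρ.rpowH (2 - 1 / α) * σ.rpowH (1 - (2 - 1 / α))).trace.re ≤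
      ((σ.rpowH ((1 - α) / (2 * α)) * ρ * σ.rpowH ((1 - α) / (2 * α))).rpowH α).trace.re ^
        α⁻¹ := by
  set N := ρ.rpowH (1 / 2) * σ.rpowH ((1 - α) / (2 * α))
  have hpsd := posSemidef_self_mul_conjTranspose N
  have hpetz : (ρ.rpowH (2 - 1 / α) * σ.rpowH (1 - (2 - 1 / α))).trace =
      ((N * Nᴴ).rpowH 1 * ρ.rpowH (1 - 1 / α)).trace := by
    rw [hpsd.1.rpowH_one, hρ.trace_mul_conjTranspose_mul_rpowH hσ
      (sub_nonneg.2 ((div_le_one (by positivity)).2 hα.le))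
      (div_ne_zero (by linarith) (by positivity))]
    congr 3 <;> field_simp <;> ring
  have hρsum : ∑ j, (hρ.1.eigenvalues j ^ (1 - 1 / α)) ^ (α / (α - 1)) = 1 := by
    have hγq : (1 - 1 / α) * (α / (α - 1)) = 1 := by
      have : α - 1 ≠ 0 := by linarith
      field_simp
    simp only [← Real.rpow_mul (hρ.eigenvalues_nonneg _), hγq, Real.rpow_one]
    simpa using congrArg Complex.re (hρ.1.trace_eq_sum_eigenvalues.symm.trans hρ1)
  calc _ = ((N * Nᴴ).rpowH 1 * ρ.rpowH (1 - 1 / α)).trace.re := by rw [hpetz]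
    _ ≤ (∑ i, (hpsd.1.eigenvalues i ^ (1 : ℝ)) ^ α) ^ (1 / α) *
        (∑ j, (hρ.1.eigenvalues j ^ (1 - 1 / α)) ^ (α / (α - 1))) ^ (1 / (α / (α - 1))) :=
      hpsd.re_trace_rpowH_mul_rpowH_le hρ 1 (1 - 1 / α) (.conjExponent hα)
    _ = ((N * Nᴴ).rpowH α).trace.re ^ α⁻¹ := by
      rw [hρsum, Real.one_rpow, mul_one]
      simp only [one_div, Real.rpow_one, hpsd.1.trace_rpowH, Complex.re_sum, Complex.ofReal_re]
    _ = _ := by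
      rw [hρ.mul_mul_eq_conjTranspose_mul_self (isHermitian_rpowH σ _),
        trace_rpowH_conjTranspose_mul_self]

end Matrix

theorem petzRenyi_le_sandwichedRenyi_general {n : ℕ}
    (ρ σ : Matrix (Fin n) (Fin n) ℂ) (hρ : ρ.PosSemidef) (hσ : σ.PosSemidef)
    (hρ1 : ρ.trace = 1)
    (hsupp : ∀ v : Fin n → ℂ, σ.mulVec v = 0 → ρ.mulVec v = 0)
    (α : ℝ) (hα : 1 < α) :
    petzRenyi (2 - 1 / α) ρ σ ≤ sandwichedRenyi α ρ σ := by
  have hρ0 : ρ ≠ 0 := by rintro rfl; simp at hρ1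
  have hQ := hρ.re_trace_rpowH_mul_rpowH_pos hσ hρ0 hsupp (2 - 1 / α) (1 - (2 - 1 / α))
  have hsandwich := hρ.mul_mul_conjTranspose_same (σ.rpowH ((1 - α) / (2 * α)))
  rw [(isHermitian_rpowH σ _).eq] at hsandwich
  have hle := hρ.re_trace_petz_le_sandwiched hσ hρ1 hα
  have hQT := (Real.le_rpow_inv_iff_of_pos hQ.le (hsandwich.re_trace_rpowH_nonneg α)
    (by positivity)).1 hle
  have hlog := (Real.rpow_le_iff_le_log hQ ((Real.rpow_pos_of_pos hQ α).trans_le hQT)).1 hQT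
  have hβ : (2 - 1 / α - 1)⁻¹ = (α - 1)⁻¹ * α := by
    field_simp
    ring
  rw [petzRenyi, sandwichedRenyi, hβ, mul_assoc]
  exact mul_le_mul_of_nonneg_left hlog (inv_nonneg.2 (by linarith))

/-- Lower bound: `D̃_α(ρ‖σ) ≥ D_{2-1/α}(ρ‖σ)` for `α > 1`. -/
theorem petzRenyi_le_sandwichedRenyi {n : ℕ}
    (ρ σ : Matrix (Fin n) (Fin n) ℂ) (hρ : ρ.PosSemidef) (hσ : σ.PosSemidef)
    (hρ1 : ρ.trace = 1) (hσ1 : σ.trace = 1)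
    (hsupp : ∀ v : Fin n → ℂ, σ.mulVec v = 0 → ρ.mulVec v = 0)
    (α : ℝ) (hα : 1 < α) :
    petzRenyi (2 - 1 / α) ρ σ ≤ sandwichedRenyi α ρ σ :=
  petzRenyi_le_sandwichedRenyi_general ρ σ hρ hσ hρ1 hsupp α hα
end
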